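/- Cut-blur principle: let lcut be an undirected cut between lsrc and lobs in a frame F, and let f be a function on sets of lsrc-runs. If F f-limits lsrc-to-lcut flow, then F f-limits lsrc-to-lobs flow. -/
import Mathlib


open scoped Classical

/-- A (static) frame: locations `LO`, channels `CH`, data values `D`.
Each channel has a sender and a recipient location; each location carries a
prefix-closed set of finite-or-infinite sequences of labels, where a label for
`ℓ` is a pair `(c, v)` with `c` a channel of `ℓ` and `v ∈ D`.  Sequences are
represented as functions `ℕ → Option (CH × D)` whose domain is an initial
segment of `ℕ`. -/
structure Frame (LO CH D : Type) where
  sender : CH → LO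
  recipt : CH → LO
  traces : LO → Set (ℕ → Option (CH × D))
  traces_dom : ∀ ℓ, ∀ t ∈ traces ℓ, ∀ m n : ℕ, m ≤ n → t n ≠ none → t m ≠ none
  traces_labels : ∀ ℓ, ∀ t ∈ traces ℓ, ∀ n c v, t n = some (c, v) →
    sender c = ℓ ∨ recipt c = ℓ
  traces_prefix : ∀ ℓ, ∀ t ∈ traces ℓ, ∀ n : ℕ,
    (fun m => if m < n then t m else none) ∈ traces ℓ

/-- Raw data of a system of events: a carrier set of events with a relation. -/
structure EvStruct (E : Type) where
  carrier : Set E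
  rel : E → E → Prop

variable {LO CH D E : Type}

/-- `B` is a system of events: `rel` is a partial order on `carrier`, and every
event has only finitely many predecessors. -/
def IsSysEv (B : EvStruct E) : Prop :=
  (∀ a b, B.rel a b → a ∈ B.carrier ∧ b ∈ B.carrier) ∧
  (∀ a ∈ B.carrier, B.rel a a) ∧
  (∀ a b, B.rel a b → B.rel b a → a = b) ∧
  (∀ a b c, B.rel a b → B.rel b c → B.rel a c) ∧
  (∀ a ∈ B.carrier, {x | B.rel x a}.Finite)

/-- `B1` is a substructure of `B2`: carrier included, order the restriction. -/
def Substructure (B1 B2 : EvStruct E) : Prop :=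
  B1.carrier ⊆ B2.carrier ∧
  ∀ a b, B1.rel a b ↔ (a ∈ B1.carrier ∧ b ∈ B1.carrier ∧ B2.rel a b)

/-- Initial substructure: a substructure that is downward closed. -/
def InitialSubstructure (B1 B2 : EvStruct E) : Prop :=
  Substructure B1 B2 ∧ ∀ y ∈ B1.carrier, ∀ x, B2.rel x y → x ∈ B1.carrier

/-- The events of `B` whose channel has `ℓ` as sender or recipient. -/
def evProj (F : Frame LO CH D) (chan : E → CH) (B : EvStruct E) (ℓ : LO) : Set E :=
  {e | e ∈ B.carrier ∧ (F.sender (chan e) = ℓ ∨ F.recipt (chan e) = ℓ)}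

/-- The projection of `B` to location `ℓ`, viewed as a sequence of labels:
the `n`-th entry is the label of the event of `evProj F chan B ℓ` having
exactly `n` strict predecessors there. -/
noncomputable def projSeq (F : Frame LO CH D) (chan : E → CH) (msg : E → D)
    (B : EvStruct E) (ℓ : LO) : ℕ → Option (CH × D) := fun n =>
  if h : ∃ e, e ∈ evProj F chan B ℓ ∧
      Set.ncard {e' | e' ∈ evProj F chan B ℓ ∧ B.rel e' e ∧ e' ≠ e} = n
  then some (chan h.choose, msg h.choose)
  else none

/-- `B` is an execution of `F`: a system of events whose projection to each
location is linearly ordered and, viewed as a sequence, a trace of that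
location. -/
def IsExec (F : Frame LO CH D) (chan : E → CH) (msg : E → D) (B : EvStruct E) : Prop :=
  IsSysEv B ∧ ∀ ℓ : LO,
    (∀ a ∈ evProj F chan B ℓ, ∀ b ∈ evProj F chan B ℓ, B.rel a b ∨ B.rel b a) ∧
    projSeq F chan msg B ℓ ∈ F.traces ℓ

/-- Restriction `B|C` of `B` to the events whose channel lies in `C`. -/
def evRestrict (chan : E → CH) (B : EvStruct E) (C : Set CH) : EvStruct E where
  carrier := {e | e ∈ B.carrier ∧ chan e ∈ C}
  rel := fun a b => B.rel a b ∧ chan a ∈ C ∧ chan b ∈ C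

/-- `lruns C`: the `C`-runs of `F`, i.e. restrictions to `C` of executions. -/
def lruns (F : Frame LO CH D) (chan : E → CH) (msg : E → D) (C : Set CH) :
    Set (EvStruct E) :=
  {B | ∃ A : EvStruct E, IsExec F chan msg A ∧ evRestrict chan A C = B}

/-- `J_{C→C'}(B)`: the `C'`-runs compatible with `B`. -/
def cmpt (F : Frame LO CH D) (chan : E → CH) (msg : E → D)
    (C C' : Set CH) (B : EvStruct E) : Set (EvStruct E) :=
  {B' | ∃ A : EvStruct E, IsExec F chan msg A ∧
      evRestrict chan A C = B ∧ evRestrict chan A C' = B'}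

/-- `F` has no disclosure from `C` to `C'`. -/
def NoDisclosure (F : Frame LO CH D) (chan : E → CH) (msg : E → D)
    (C C' : Set CH) : Prop :=
  ∀ B ∈ lruns F chan msg C, cmpt F chan msg C C' B = lruns F chan msg C'

/-- The locations that are sender or recipient of some channel in `C`. -/
def pends (F : Frame LO CH D) (C : Set CH) : Set LO :=
  {ℓ | ∃ c ∈ C, F.sender c = ℓ ∨ F.recipt c = ℓ}

/-- Adjacency in the undirected graph of `F` via a channel avoiding `K`. -/
def adjAvoiding (F : Frame LO CH D) (K : Set CH) (ℓ1 ℓ2 : LO) : Prop :=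
  ∃ c, c ∉ K ∧
    ((F.sender c = ℓ1 ∧ F.recipt c = ℓ2) ∨ (F.sender c = ℓ2 ∧ F.recipt c = ℓ1))

/-- `lcut` is an undirected cut between `lsrc` and `lobs`: the three sets are
pairwise disjoint and every undirected path from a location of `pends lobs`
to a location of `pends lsrc` traverses some channel of `lcut`, i.e. there is
no path avoiding `lcut`. -/
def IsCut (F : Frame LO CH D) (lsrc lcut lobs : Set CH) : Prop :=
  (Disjoint lsrc lcut ∧ Disjoint lsrc lobs ∧ Disjoint lcut lobs) ∧
  ∀ ℓ1 ∈ pends F lobs, ∀ ℓ2 ∈ pends F lsrc,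
    ¬ Relation.ReflTransGen (adjAvoiding F lcut) ℓ1 ℓ2

/-- A blur operator: inclusion, idempotence, and commutation with unions. -/
def IsBlur {α : Type} (f : Set α → Set α) : Prop :=
  (∀ S, S ⊆ f S) ∧ (∀ S, f (f S) = f S) ∧
  ∀ (ι : Type) (S : ι → Set α), f (⋃ i, S i) = ⋃ i, f (S i)

/-- `F` `f`-limits `lsrc`-to-`lobs` flow: `f` is a blur operator (on sets of
`lsrc`-runs) and every compatibility set `J_{lobs→lsrc}(B_o)` is `f`-blurred. -/
def FLimits (F : Frame LO CH D) (chan : E → CH) (msg : E → D)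
    (lsrc lobs : Set CH) (f : Set (EvStruct E) → Set (EvStruct E)) : Prop :=
  IsBlur f ∧ ∀ B ∈ lruns F chan msg lobs,
    f (cmpt F chan msg lobs lsrc B) = cmpt F chan msg lobs lsrc B

/-! ### Auxiliary machinery for the cut-blur principle -/

/-- Extensionality for `EvStruct`. -/
private lemma EvStruct.ext' {E : Type} {X Y : EvStruct E}
    (h1 : X.carrier = Y.carrier) (h2 : X.rel = Y.rel) : X = Y := by
  cases X; cases Y; cases h1; cases h2; rfl

/-- The source side of the cut: locations connected to `pends lsrc`
avoiding `lcut`. -/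
abbrev sideR (F : Frame LO CH D) (lsrc lcut : Set CH) (ℓ : LO) : Prop :=
  ∃ ℓ2 ∈ pends F lsrc, Relation.ReflTransGen (adjAvoiding F lcut) ℓ ℓ2

/-- Source-side events: channel not in the cut and its sender on the
source side. -/
abbrev sideP (F : Frame LO CH D) (chan : E → CH) (lsrc lcut : Set CH) (e : E) : Prop :=
  chan e ∉ lcut ∧ sideR F lsrc lcut (F.sender (chan e))

/-- Gluing of two executions along the cut: source-side events from `B`,
other events from `A`; cross-side order goes through cut events. -/
private def glueEv (F : Frame LO CH D) (chan : E → CH) (lsrc lcut : Set CH)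
    (A B : EvStruct E) : EvStruct E where
  carrier := {e | (sideP F chan lsrc lcut e ∧ e ∈ B.carrier) ∨
    (¬ sideP F chan lsrc lcut e ∧ e ∈ A.carrier)}
  rel := fun a b =>
    (sideP F chan lsrc lcut a ∧ sideP F chan lsrc lcut b ∧ B.rel a b) ∨
    (¬sideP F chan lsrc lcut a ∧ ¬sideP F chan lsrc lcut b ∧ A.rel a b) ∨
    (sideP F chan lsrc lcut a ∧ ¬sideP F chan lsrc lcut b ∧
      ∃ m, chan m ∈ lcut ∧ B.rel a m ∧ A.rel m b) ∨
    (¬sideP F chan lsrc lcut a ∧ sideP F chan lsrc lcut b ∧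
      ∃ m, chan m ∈ lcut ∧ A.rel a m ∧ B.rel m b)

/-- `projSeq` only depends on the projected event set and the order
restricted to it. -/
private lemma projSeq_congr (F : Frame LO CH D) (chan : E → CH) (msg : E → D)
    (B1 B2 : EvStruct E) (ℓ : LO)
    (hp : evProj F chan B1 ℓ = evProj F chan B2 ℓ)
    (hr : ∀ a ∈ evProj F chan B2 ℓ, ∀ b ∈ evProj F chan B2 ℓ, (B1.rel a b ↔ B2.rel a b)) :
    projSeq F chan msg B1 ℓ = projSeq F chan msg B2 ℓ := by
  have hpred : ∀ n : ℕ, (fun e : E => e ∈ evProj F chan B1 ℓ ∧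
      Set.ncard {e' | e' ∈ evProj F chan B1 ℓ ∧ B1.rel e' e ∧ e' ≠ e} = n) =
      (fun e : E => e ∈ evProj F chan B2 ℓ ∧
      Set.ncard {e' | e' ∈ evProj F chan B2 ℓ ∧ B2.rel e' e ∧ e' ≠ e} = n) := by
    intro n; funext e; apply propext
    by_cases he : e ∈ evProj F chan B2 ℓ
    · have hset : {e' | e' ∈ evProj F chan B1 ℓ ∧ B1.rel e' e ∧ e' ≠ e} =
          {e' | e' ∈ evProj F chan B2 ℓ ∧ B2.rel e' e ∧ e' ≠ e} := by
        ext e'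
        simp only [Set.mem_setOf_eq, hp]
        exact and_congr_right fun h1 => and_congr_left fun _ => hr e' h1 e he
      rw [hset, hp]
    · have he1 : e ∉ evProj F chan B1 ℓ := by rw [hp]; exact he
      simp [he, he1]
  funext n
  unfold projSeq
  rw [hpred n]

private lemma glue (F : Frame LO CH D) (chan : E → CH) (msg : E → D)
    (lsrc lcut lobs : Set CH) (hcut : IsCut F lsrc lcut lobs)
    (A B : EvStruct E) (hA : IsExec F chan msg A) (hB : IsExec F chan msg B)
    (hc : evRestrict chan A lcut = evRestrict chan B lcut) :
    ∃ G : EvStruct E, IsExec F chan msg G ∧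
      evRestrict chan G lobs = evRestrict chan A lobs ∧
      evRestrict chan G lsrc = evRestrict chan B lsrc := by
  classical
  obtain ⟨⟨hd1, hd2, hd3⟩, hpath⟩ := hcut
  obtain ⟨⟨hA1, hA2, hA3, hA4, hA5⟩, hAloc⟩ := hA
  obtain ⟨⟨hB1, hB2, hB3, hB4, hB5⟩, hBloc⟩ := hB
  -- consequences of the agreement on the cut
  have hcar : ∀ e, chan e ∈ lcut → (e ∈ A.carrier ↔ e ∈ B.carrier) := by
    intro e he
    have h2 : (e ∈ (evRestrict chan A lcut).carrier) = (e ∈ (evRestrict chan B lcut).carrier) := by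
      rw [hc]
    simp only [evRestrict, Set.mem_setOf_eq] at h2
    constructor
    · intro ha; exact ((iff_of_eq h2).mp ⟨ha, he⟩).1
    · intro hb; exact ((iff_of_eq h2).mpr ⟨hb, he⟩).1
  have hrelc : ∀ a b, chan a ∈ lcut → chan b ∈ lcut → (A.rel a b ↔ B.rel a b) := by
    intro a b ha hb
    have h2 : ((evRestrict chan A lcut).rel a b) = ((evRestrict chan B lcut).rel a b) := by
      rw [hc]
    simp only [evRestrict] at h2
    constructor
    · intro hx; exact ((iff_of_eq h2).mp ⟨hx, ha, hb⟩).1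
    · intro hx; exact ((iff_of_eq h2).mpr ⟨hx, ha, hb⟩).1
  -- side facts
  have hadj_symm : ∀ ℓ1 ℓ2, adjAvoiding F lcut ℓ1 ℓ2 → adjAvoiding F lcut ℓ2 ℓ1 := by
    rintro ℓ1 ℓ2 ⟨c, hcne, h | h⟩
    · exact ⟨c, hcne, Or.inr h⟩
    · exact ⟨c, hcne, Or.inl h⟩
  have hRstep : ∀ ℓ1 ℓ2, adjAvoiding F lcut ℓ1 ℓ2 →
      (sideR F lsrc lcut ℓ1 ↔ sideR F lsrc lcut ℓ2) := by
    intro ℓ1 ℓ2 hadj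
    constructor
    · rintro ⟨ℓ3, hℓ3, hrt⟩
      exact ⟨ℓ3, hℓ3, Relation.ReflTransGen.head (hadj_symm _ _ hadj) hrt⟩
    · rintro ⟨ℓ3, hℓ3, hrt⟩
      exact ⟨ℓ3, hℓ3, Relation.ReflTransGen.head hadj hrt⟩
  have hloc : ∀ (ℓ : LO) (e : E), (F.sender (chan e) = ℓ ∨ F.recipt (chan e) = ℓ) →
      chan e ∉ lcut → (sideP F chan lsrc lcut e ↔ sideR F lsrc lcut ℓ) := by
    intro ℓ e hend hne
    have hiff : sideR F lsrc lcut (F.sender (chan e)) ↔ sideR F lsrc lcut ℓ := by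
      rcases hend with h | h
      · rw [h]
      · have := hRstep (F.sender (chan e)) (F.recipt (chan e)) ⟨chan e, hne, Or.inl ⟨rfl, rfl⟩⟩
        rw [h] at this
        exact this
    exact (and_iff_right hne).trans hiff
  have hPsrc : ∀ e, chan e ∈ lsrc → sideP F chan lsrc lcut e :=
    fun e he => ⟨fun hcc => (Set.disjoint_left.mp hd1 he) hcc,
      ⟨F.sender (chan e), ⟨chan e, he, Or.inl rfl⟩, Relation.ReflTransGen.refl⟩⟩
  have hPobs : ∀ e, chan e ∈ lobs → ¬ sideP F chan lsrc lcut e := by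
    rintro e he ⟨hne, ℓ2, hℓ2, hrt⟩
    exact hpath (F.sender (chan e)) ⟨chan e, he, Or.inl rfl⟩ ℓ2 hℓ2 hrt
  have hPcut : ∀ e, chan e ∈ lcut → ¬ sideP F chan lsrc lcut e :=
    fun e he hp => hp.1 he
  set G : EvStruct E := glueEv F chan lsrc lcut A B with hGdef
  have hGcar : ∀ e, e ∈ G.carrier ↔ ((sideP F chan lsrc lcut e ∧ e ∈ B.carrier) ∨
      (¬ sideP F chan lsrc lcut e ∧ e ∈ A.carrier)) := fun e => Iff.rfl
  have hGrel : ∀ a b, G.rel a b ↔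
      ((sideP F chan lsrc lcut a ∧ sideP F chan lsrc lcut b ∧ B.rel a b) ∨
      (¬sideP F chan lsrc lcut a ∧ ¬sideP F chan lsrc lcut b ∧ A.rel a b) ∨
      (sideP F chan lsrc lcut a ∧ ¬sideP F chan lsrc lcut b ∧
        ∃ m, chan m ∈ lcut ∧ B.rel a m ∧ A.rel m b) ∨
      (¬sideP F chan lsrc lcut a ∧ sideP F chan lsrc lcut b ∧
        ∃ m, chan m ∈ lcut ∧ A.rel a m ∧ B.rel m b)) := fun a b => Iff.rfl
  -- system of events
  have hGsys1 : ∀ a b, G.rel a b → a ∈ G.carrier ∧ b ∈ G.carrier := by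
    intro a b hab
    rcases (hGrel a b).mp hab with ⟨pa, pb, hr⟩ | ⟨pa, pb, hr⟩ |
      ⟨pa, pb, m, hm, h1, h2⟩ | ⟨pa, pb, m, hm, h1, h2⟩
    · exact ⟨(hGcar a).mpr (Or.inl ⟨pa, (hB1 _ _ hr).1⟩),
        (hGcar b).mpr (Or.inl ⟨pb, (hB1 _ _ hr).2⟩)⟩
    · exact ⟨(hGcar a).mpr (Or.inr ⟨pa, (hA1 _ _ hr).1⟩),
        (hGcar b).mpr (Or.inr ⟨pb, (hA1 _ _ hr).2⟩)⟩
    · exact ⟨(hGcar a).mpr (Or.inl ⟨pa, (hB1 _ _ h1).1⟩),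
        (hGcar b).mpr (Or.inr ⟨pb, (hA1 _ _ h2).2⟩)⟩
    · exact ⟨(hGcar a).mpr (Or.inr ⟨pa, (hA1 _ _ h1).1⟩),
        (hGcar b).mpr (Or.inl ⟨pb, (hB1 _ _ h2).2⟩)⟩
  have hGrefl : ∀ a, a ∈ G.carrier → G.rel a a := by
    intro a ha
    rcases (hGcar a).mp ha with ⟨pa, hb⟩ | ⟨pa, hb⟩
    · exact (hGrel a a).mpr (Or.inl ⟨pa, pa, hB2 a hb⟩)
    · exact (hGrel a a).mpr (Or.inr (Or.inl ⟨pa, pa, hA2 a hb⟩))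
  have hGanti : ∀ a b, G.rel a b → G.rel b a → a = b := by
    intro a b hab hba
    rcases (hGrel a b).mp hab with ⟨pa, pb, h⟩ | ⟨pa, pb, h⟩ |
        ⟨pa, pb, m, hm, h1, h2⟩ | ⟨pa, pb, m, hm, h1, h2⟩ <;>
      rcases (hGrel b a).mp hba with ⟨pb', pa', h'⟩ | ⟨pb', pa', h'⟩ |
        ⟨pb', pa', m', hm', h1', h2'⟩ | ⟨pb', pa', m', hm', h1', h2'⟩
    · exact hB3 a b h h'
    · exact absurd pb pb'
    · exact absurd pa pa'
    · exact absurd pb pb'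
    · exact absurd pb' pb
    · exact hA3 a b h h'
    · exact absurd pb' pb
    · exact absurd pa' pa
    · exact absurd pb' pb
    · exact absurd pa pa'
    · exact absurd pb' pb
    · -- P a, not P b, both ways: impossible
      exfalso
      have hmm' : B.rel m m' := (hrelc m m' hm hm').mp (hA4 m b m' h2 h1')
      have hxx : B.rel a m' := hB4 a m m' h1 hmm'
      have heq : a = m' := hB3 a m' hxx h2'
      exact pa.1 (heq ▸ hm')
    · exact absurd pa' pa
    · exact absurd pb pb'
    · -- not P a, P b, both ways: impossible
      exfalso
      have hmm' : B.rel m' m := (hrelc m' m hm' hm).mp (hA4 m' a m h2' h1)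
      have hxx : B.rel b m := hB4 b m' m h1' hmm'
      have heq : b = m := hB3 b m hxx h2
      exact pb.1 (heq ▸ hm)
    · exact absurd pb pb'
  have hGtrans : ∀ a b c, G.rel a b → G.rel b c → G.rel a c := by
    intro a b c hab hbc
    rcases (hGrel a b).mp hab with ⟨pa, pb, h⟩ | ⟨pa, pb, h⟩ |
        ⟨pa, pb, m, hm, h1, h2⟩ | ⟨pa, pb, m, hm, h1, h2⟩ <;>
      rcases (hGrel b c).mp hbc with ⟨pb', pc, h'⟩ | ⟨pb', pc, h'⟩ |
        ⟨pb', pc, m', hm', h1', h2'⟩ | ⟨pb', pc, m', hm', h1', h2'⟩ <;>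
      apply (hGrel a c).mpr
    · exact Or.inl ⟨pa, pc, hB4 a b c h h'⟩
    · exact absurd pb pb'
    · exact Or.inr (Or.inr (Or.inl ⟨pa, pc, m', hm', hB4 a b m' h h1', h2'⟩))
    · exact absurd pb pb'
    · exact absurd pb' pb
    · exact Or.inr (Or.inl ⟨pa, pc, hA4 a b c h h'⟩)
    · exact absurd pb' pb
    · exact Or.inr (Or.inr (Or.inr ⟨pa, pc, m', hm', hA4 a b m' h h1', h2'⟩))
    · exact absurd pb' pb
    · exact Or.inr (Or.inr (Or.inl ⟨pa, pc, m, hm, h1, hA4 m b c h2 h'⟩))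
    · exact absurd pb' pb
    · -- P a, not P b, P c: cross through both cut events
      have hmm' : B.rel m m' := (hrelc m m' hm hm').mp (hA4 m b m' h2 h1')
      exact Or.inl ⟨pa, pc, hB4 a m' c (hB4 a m m' h1 hmm') h2'⟩
    · exact Or.inr (Or.inr (Or.inr ⟨pa, pc, m, hm, h1, hB4 m b c h2 h'⟩))
    · exact absurd pb pb'
    · -- not P a, P b, not P c
      have hmm' : A.rel m m' := (hrelc m m' hm hm').mpr (hB4 m b m' h2 h1')
      exact Or.inr (Or.inl ⟨pa, pc, hA4 a m' c (hA4 a m m' h1 hmm') h2'⟩)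
    · exact absurd pb pb'
  have hApred : ∀ m, {x | A.rel x m}.Finite := by
    intro m
    by_cases hm : m ∈ A.carrier
    · exact hA5 m hm
    · have hemp : {x | A.rel x m} = ∅ :=
        Set.eq_empty_iff_forall_notMem.mpr fun x hx => hm (hA1 _ _ hx).2
      rw [hemp]; exact Set.finite_empty
  have hBpred : ∀ m, {x | B.rel x m}.Finite := by
    intro m
    by_cases hm : m ∈ B.carrier
    · exact hB5 m hm
    · have hemp : {x | B.rel x m} = ∅ :=
        Set.eq_empty_iff_forall_notMem.mpr fun x hx => hm (hB1 _ _ hx).2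
      rw [hemp]; exact Set.finite_empty
  have hGfin : ∀ b, b ∈ G.carrier → {x | G.rel x b}.Finite := by
    intro b _
    by_cases pb : sideP F chan lsrc lcut b
    · have hsub : {x | G.rel x b} ⊆ {x | B.rel x b} ∪ ⋃ m ∈ {m | B.rel m b}, {x | A.rel x m} := by
        intro x hx
        rcases (hGrel x b).mp hx with ⟨_, _, hr⟩ | ⟨_, nb, _⟩ | ⟨_, nb, _⟩ | ⟨_, _, m, hm, h1, h2⟩
        · exact Or.inl hr
        · exact absurd pb nb
        · exact absurd pb nb
        · exact Or.inr (Set.mem_biUnion h2 h1)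
      exact Set.Finite.subset
        (Set.Finite.union (hBpred b) (Set.Finite.biUnion (hBpred b) fun m _ => hApred m)) hsub
    · have hsub : {x | G.rel x b} ⊆ {x | A.rel x b} ∪ ⋃ m ∈ {m | A.rel m b}, {x | B.rel x m} := by
        intro x hx
        rcases (hGrel x b).mp hx with ⟨_, pb', _⟩ | ⟨_, _, hr⟩ | ⟨_, _, m, hm, h1, h2⟩ | ⟨_, pb', _⟩
        · exact absurd pb' pb
        · exact Or.inl hr
        · exact Or.inr (Set.mem_biUnion h2 h1)
        · exact absurd pb' pb
      exact Set.Finite.subset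
        (Set.Finite.union (hApred b) (Set.Finite.biUnion (hApred b) fun m _ => hBpred m)) hsub
  -- projections agree with B on the source side and with A elsewhere
  have hprojR : ∀ ℓ, sideR F lsrc lcut ℓ → evProj F chan G ℓ = evProj F chan B ℓ := by
    intro ℓ hRℓ
    ext e
    simp only [evProj, Set.mem_setOf_eq]
    constructor
    · rintro ⟨he, hend⟩
      refine ⟨?_, hend⟩
      rcases (hGcar e).mp he with ⟨pe, hb⟩ | ⟨pe, ha⟩
      · exact hb
      · by_cases hcutc : chan e ∈ lcut
        · exact (hcar e hcutc).mp ha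
        · exact absurd ((hloc ℓ e hend hcutc).mpr hRℓ) pe
    · rintro ⟨he, hend⟩
      refine ⟨?_, hend⟩
      by_cases hcutc : chan e ∈ lcut
      · exact (hGcar e).mpr (Or.inr ⟨hPcut e hcutc, (hcar e hcutc).mpr he⟩)
      · exact (hGcar e).mpr (Or.inl ⟨(hloc ℓ e hend hcutc).mpr hRℓ, he⟩)
  have hprojA : ∀ ℓ, ¬ sideR F lsrc lcut ℓ → evProj F chan G ℓ = evProj F chan A ℓ := by
    intro ℓ hRℓ
    have hnP : ∀ e : E, (F.sender (chan e) = ℓ ∨ F.recipt (chan e) = ℓ) →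
        ¬ sideP F chan lsrc lcut e := by
      intro e hend pe
      by_cases hcutc : chan e ∈ lcut
      · exact pe.1 hcutc
      · exact hRℓ ((hloc ℓ e hend hcutc).mp pe)
    ext e
    simp only [evProj, Set.mem_setOf_eq]
    constructor
    · rintro ⟨he, hend⟩
      rcases (hGcar e).mp he with ⟨pe, hb⟩ | ⟨pe, ha⟩
      · exact absurd pe (hnP e hend)
      · exact ⟨ha, hend⟩
    · rintro ⟨he, hend⟩
      exact ⟨(hGcar e).mpr (Or.inr ⟨hnP e hend, he⟩), hend⟩
  have hrelR : ∀ ℓ, sideR F lsrc lcut ℓ → ∀ a ∈ evProj F chan B ℓ, ∀ b ∈ evProj F chan B ℓ,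
      (G.rel a b ↔ B.rel a b) := by
    intro ℓ hRℓ a ha b hb
    have key : ∀ e ∈ evProj F chan B ℓ, sideP F chan lsrc lcut e ∨ chan e ∈ lcut := by
      rintro e ⟨he, hend⟩
      by_cases hcutc : chan e ∈ lcut
      · exact Or.inr hcutc
      · exact Or.inl ((hloc ℓ e hend hcutc).mpr hRℓ)
    constructor
    · intro hab
      rcases (hGrel a b).mp hab with ⟨_, _, hr⟩ | ⟨na, nb, hr⟩ |
          ⟨_, nb, m, hm, h1, h2⟩ | ⟨na, _, m, hm, h1, h2⟩
      · exact hr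
      · rcases key a ha with pa | hca
        · exact absurd pa na
        · rcases key b hb with pb | hcb
          · exact absurd pb nb
          · exact (hrelc a b hca hcb).mp hr
      · rcases key b hb with pb | hcb
        · exact absurd pb nb
        · exact hB4 a m b h1 ((hrelc m b hm hcb).mp h2)
      · rcases key a ha with pa | hca
        · exact absurd pa na
        · exact hB4 a m b ((hrelc a m hca hm).mp h1) h2
    · intro hab
      rcases key a ha with pa | hca
      · rcases key b hb with pb | hcb
        · exact (hGrel a b).mpr (Or.inl ⟨pa, pb, hab⟩)
        · refine (hGrel a b).mpr (Or.inr (Or.inr (Or.inl ⟨pa, hPcut b hcb, b, hcb, hab, ?_⟩)))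
          exact hA2 b ((hcar b hcb).mpr hb.1)
      · rcases key b hb with pb | hcb
        · refine (hGrel a b).mpr (Or.inr (Or.inr (Or.inr ⟨hPcut a hca, pb, a, hca, ?_, hab⟩)))
          exact hA2 a ((hcar a hca).mpr ha.1)
        · exact (hGrel a b).mpr (Or.inr (Or.inl ⟨hPcut a hca, hPcut b hcb,
            (hrelc a b hca hcb).mpr hab⟩))
  have hrelA : ∀ ℓ, ¬ sideR F lsrc lcut ℓ → ∀ a ∈ evProj F chan A ℓ, ∀ b ∈ evProj F chan A ℓ,
      (G.rel a b ↔ A.rel a b) := by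
    intro ℓ hRℓ a ha b hb
    have hnP : ∀ e ∈ evProj F chan A ℓ, ¬ sideP F chan lsrc lcut e := by
      rintro e ⟨he, hend⟩ pe
      by_cases hcutc : chan e ∈ lcut
      · exact pe.1 hcutc
      · exact hRℓ ((hloc ℓ e hend hcutc).mp pe)
    constructor
    · intro hab
      rcases (hGrel a b).mp hab with ⟨pa, _, _⟩ | ⟨_, _, hr⟩ |
          ⟨pa, _, _⟩ | ⟨_, pb, _⟩
      · exact absurd pa (hnP a ha)
      · exact hr
      · exact absurd pa (hnP a ha)
      · exact absurd pb (hnP b hb)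
    · intro hab
      exact (hGrel a b).mpr (Or.inr (Or.inl ⟨hnP a ha, hnP b hb, hab⟩))
  refine ⟨G, ⟨⟨hGsys1, hGrefl, hGanti, hGtrans, hGfin⟩, fun ℓ => ?_⟩, ?_, ?_⟩
  · by_cases hRℓ : sideR F lsrc lcut ℓ
    · have hp := hprojR ℓ hRℓ
      have hr := hrelR ℓ hRℓ
      constructor
      · intro a ha b hb
        rw [hp] at ha hb
        rcases (hBloc ℓ).1 a ha b hb with hh | hh
        · exact Or.inl ((hr a ha b hb).mpr hh)
        · exact Or.inr ((hr b hb a ha).mpr hh)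
      · rw [projSeq_congr F chan msg G B ℓ hp hr]
        exact (hBloc ℓ).2
    · have hp := hprojA ℓ hRℓ
      have hr := hrelA ℓ hRℓ
      constructor
      · intro a ha b hb
        rw [hp] at ha hb
        rcases (hAloc ℓ).1 a ha b hb with hh | hh
        · exact Or.inl ((hr a ha b hb).mpr hh)
        · exact Or.inr ((hr b hb a ha).mpr hh)
      · rw [projSeq_congr F chan msg G A ℓ hp hr]
        exact (hAloc ℓ).2
  · -- restriction to lobs equals that of A
    apply EvStruct.ext'
    · ext e
      simp only [evRestrict, Set.mem_setOf_eq]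
      constructor
      · rintro ⟨he, hco⟩
        rcases (hGcar e).mp he with ⟨pe, _⟩ | ⟨_, ha⟩
        · exact absurd pe (hPobs e hco)
        · exact ⟨ha, hco⟩
      · rintro ⟨he, hco⟩
        exact ⟨(hGcar e).mpr (Or.inr ⟨hPobs e hco, he⟩), hco⟩
    · funext a b
      apply propext
      simp only [evRestrict]
      constructor
      · rintro ⟨hab, hca, hcb⟩
        refine ⟨?_, hca, hcb⟩
        rcases (hGrel a b).mp hab with ⟨pa, _, _⟩ | ⟨_, _, hr⟩ | ⟨pa, _, _⟩ | ⟨_, pb, _⟩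
        · exact absurd pa (hPobs a hca)
        · exact hr
        · exact absurd pa (hPobs a hca)
        · exact absurd pb (hPobs b hcb)
      · rintro ⟨hab, hca, hcb⟩
        exact ⟨(hGrel a b).mpr (Or.inr (Or.inl ⟨hPobs a hca, hPobs b hcb, hab⟩)), hca, hcb⟩
  · -- restriction to lsrc equals that of B
    apply EvStruct.ext'
    · ext e
      simp only [evRestrict, Set.mem_setOf_eq]
      constructor
      · rintro ⟨he, hco⟩
        rcases (hGcar e).mp he with ⟨_, hb⟩ | ⟨pe, _⟩
        · exact ⟨hb, hco⟩
        · exact absurd (hPsrc e hco) pe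
      · rintro ⟨he, hco⟩
        exact ⟨(hGcar e).mpr (Or.inl ⟨hPsrc e hco, he⟩), hco⟩
    · funext a b
      apply propext
      simp only [evRestrict]
      constructor
      · rintro ⟨hab, hca, hcb⟩
        refine ⟨?_, hca, hcb⟩
        rcases (hGrel a b).mp hab with ⟨_, _, hr⟩ | ⟨na, _, _⟩ | ⟨_, nb, _⟩ | ⟨na, _, _⟩
        · exact hr
        · exact absurd (hPsrc a hca) na
        · exact absurd (hPsrc b hcb) nb
        · exact absurd (hPsrc a hca) na
      · rintro ⟨hab, hca, hcb⟩
        exact ⟨(hGrel a b).mpr (Or.inl ⟨hPsrc a hca, hPsrc b hcb, hab⟩), hca, hcb⟩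

/-- Cut-blur principle: if `lcut` is an undirected cut between
`lsrc` and `lobs` and `F` `f`-limits `lsrc`-to-`lcut` flow, then `F`
`f`-limits `lsrc`-to-`lobs` flow. -/
theorem cut_blur (F : Frame LO CH D) (chan : E → CH) (msg : E → D)
    (lsrc lcut lobs : Set CH) (f : Set (EvStruct E) → Set (EvStruct E))
    (hcut : IsCut F lsrc lcut lobs)
    (h : FLimits F chan msg lsrc lcut f) :
    FLimits F chan msg lsrc lobs f := by
  obtain ⟨hblur, hlim⟩ := h
  refine ⟨hblur, fun Bo hBo => ?_⟩
  have hdecomp : cmpt F chan msg lobs lsrc Bo =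
      ⋃ i : {Bc // Bc ∈ cmpt F chan msg lobs lcut Bo}, cmpt F chan msg lcut lsrc i.1 := by
    ext Bs
    simp only [Set.mem_iUnion]
    constructor
    · rintro ⟨A, hA, hA1, hA2⟩
      exact ⟨⟨evRestrict chan A lcut, ⟨A, hA, hA1, rfl⟩⟩, ⟨A, hA, rfl, hA2⟩⟩
    · rintro ⟨⟨Bc, A, hA, hAo, hAc⟩, A', hA', hA'c, hA's⟩
      obtain ⟨G, hG, hGo, hGs⟩ := glue F chan msg lsrc lcut lobs hcut A A' hA hA'
        (by rw [hAc, hA'c])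
      exact ⟨G, hG, hGo.trans hAo, hGs.trans hA's⟩
  rw [hdecomp, hblur.2.2]
  refine Set.iUnion_congr fun i => ?_
  obtain ⟨Bc, hBc⟩ := i
  obtain ⟨A, hA, hAo, hAc⟩ := hBc
  exact hlim Bc ⟨A, hA, hAc⟩
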